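/- Let a : 𝔻 × ℝ × {b ∈ ℂ : |b| = 1} → ℂ be continuous with compact support, and define its Weyl integral kernel by ã(y,z) := ∫_ℝ ∫₀^{2π} a(M(z,y); λ, e^{iθ}) · e_{λ,e^{iθ}}(y) · e_{−λ,e^{iθ}}(z) · (λ/(4π))·tanh(πλ/2) (dθ/(2π)) dλ. Then for every holomorphic automorphism g(z) = exp(iα)·φ_w(z) of 𝔻 (α ∈ ℝ, w ∈ 𝔻) and all y, z ∈ 𝔻, ã(g(y), g(z)) = (a^g)~(y, z), where a^g(x; λ, b) := a(g(x); λ, g(b)) and (a^g)~ is the kernel built from a^g by the same formula. -/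

import Mathlib

open MeasureTheory

/-- The open unit disc in the complex plane. -/
def Disc : Set ℂ := {z : ℂ | ‖z‖ < 1}

/-- The geodesic symmetry `φ_a(z) = (a - z)/(1 - conj(a)·z)`. -/
noncomputable def phi (a z : ℂ) : ℂ := (a - z) / (1 - (starRingEnd ℂ) a * z)

/-- The hyperbolic measure `dμ(z) = (1 - |z|²)⁻² dA(z)` on the unit disc. -/
noncomputable def hypMeasure : Measure ℂ :=
  (volume.restrict Disc).withDensity fun z => ENNReal.ofReal ((1 - ‖z‖ ^ 2)⁻¹ ^ 2)

/-- The plane wave `e_{λ,b}(z) = ((1 - |z|²)/|z - b|²)^{(1+iλ)/2}`. -/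
noncomputable def pw (lam : ℝ) (b z : ℂ) : ℂ :=
  (((1 - ‖z‖ ^ 2) / ‖z - b‖ ^ 2 : ℝ) : ℂ) ^
    ((1 + Complex.I * (lam : ℂ)) / 2)

/-- The Weyl integral kernel
`ã(y,z) = ∫_ℝ ∫₀^{2π} a(M(z,y);λ,e^{iθ})·e_{λ,e^{iθ}}(y)·e_{-λ,e^{iθ}}(z)
  ·(λ/(4π))·tanh(πλ/2) (dθ/(2π)) dλ`. -/
noncomputable def weylKernel (M : ℂ → ℂ → ℂ) (a : ℂ → ℝ → ℂ → ℂ) (y z : ℂ) : ℂ :=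
  ∫ lam : ℝ,
    ((lam / (4 * Real.pi) * Real.tanh (Real.pi * lam / 2) / (2 * Real.pi) : ℝ) : ℂ) *
      ∫ θ in (0:ℝ)..(2 * Real.pi),
        a (M z y) lam (Complex.exp (Complex.I * (θ : ℂ))) *
          pw lam (Complex.exp (Complex.I * (θ : ℂ))) y *
          pw (-lam) (Complex.exp (Complex.I * (θ : ℂ))) z

/-!
The automorphism `g = e^{iα} φ_w` is a hyperbolic isometry, so it maps the (unique) geodesic
midpoint of `z, y` to that of `g z, g y`. On the boundary circle `g` is a diffeomorphism whose
Jacobian is the Poisson kernel `P(w, b)`, while the plane waves transform by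
`e_{λ, g b}(g x) = e_{λ, b}(x) · P(w, b)^{-(1+iλ)/2}`. In the product `e_{λ}(y) e_{-λ}(z)` these
factors combine to `P(w, b)⁻¹`, which cancels the Jacobian of the substitution `b ↦ g b` in the
`θ`-integral.
-/

open Complex ComplexConjugate

lemma normSq_lt_one_iff {z : ℂ} : normSq z < 1 ↔ ‖z‖ < 1 := by
  rw [← Complex.sq_norm, sq_lt_one_iff₀ (norm_nonneg z)]

lemma one_sub_conj_mul_ne_zero {a z : ℂ} (ha : ‖a‖ < 1) (hz : ‖z‖ ≤ 1) :
    1 - conj a * z ≠ 0 := by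
  intro h
  have hlt : ‖conj a * z‖ < 1 := by
    rw [norm_mul, norm_conj]
    exact mul_lt_one_of_nonneg_of_lt_one_left (norm_nonneg a) ha hz
  rw [← sub_eq_zero.1 h, norm_one] at hlt
  exact lt_irrefl 1 hlt

lemma normSq_one_sub_conj_mul_sub_normSq_sub (a z : ℂ) :
    normSq (1 - conj a * z) - normSq (a - z) = (1 - normSq a) * (1 - normSq z) := by
  simp only [normSq_apply, sub_re, sub_im, mul_re, mul_im, one_re, one_im, conj_re, conj_im]
  ring

lemma one_sub_normSq_phi {a z : ℂ} (h : 1 - conj a * z ≠ 0) :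
    1 - normSq (phi a z) = (1 - normSq a) * (1 - normSq z) / normSq (1 - conj a * z) := by
  rw [phi, normSq_div, one_sub_div (normSq_pos.2 h).ne',
    normSq_one_sub_conj_mul_sub_normSq_sub]

lemma norm_phi_lt_one {a z : ℂ} (ha : ‖a‖ < 1) (hz : ‖z‖ < 1) : ‖phi a z‖ < 1 := by
  have hden := one_sub_conj_mul_ne_zero ha hz.le
  have key := one_sub_normSq_phi hden
  rw [← normSq_lt_one_iff] at ha hz ⊢
  have : 0 < 1 - normSq (phi a z) := by
    rw [key]; exact div_pos (mul_pos (sub_pos.2 ha) (sub_pos.2 hz)) (normSq_pos.2 hden)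
  linarith

lemma phi_sub_phi {c x y : ℂ} (hx : 1 - conj c * x ≠ 0) (hy : 1 - conj c * y ≠ 0) :
    phi c x - phi c y = (y - x) * (1 - c * conj c) / ((1 - conj c * x) * (1 - conj c * y)) := by
  rw [phi, phi, div_sub_div _ _ hx hy]
  congr 1
  ring

lemma normSq_phi_sub_phi {c x y : ℂ} (hx : 1 - conj c * x ≠ 0) (hy : 1 - conj c * y ≠ 0) :
    normSq (phi c x - phi c y)
      = normSq (x - y) * (1 - normSq c) ^ 2
        / (normSq (1 - conj c * x) * normSq (1 - conj c * y)) := by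
  rw [phi_sub_phi hx hy, mul_conj, ← ofReal_one, ← ofReal_sub, normSq_div, normSq_mul, normSq_mul,
    normSq_ofReal, ← normSq_neg, neg_sub]
  ring

lemma one_sub_conj_phi_mul_phi {c x y : ℂ} (hx : 1 - conj c * x ≠ 0) (hy : 1 - conj c * y ≠ 0) :
    1 - conj (phi c x) * phi c y
      = (1 - c * conj c) * (1 - conj x * y) / ((1 - c * conj x) * (1 - conj c * y)) := by
  have hx' : 1 - c * conj x ≠ 0 := by simpa [mul_comm] using (map_ne_zero conj).2 hx
  rw [phi, phi, map_div₀, div_mul_div_comm, one_sub_div (mul_ne_zero (by simpa using hx') hy)]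
  simp only [map_sub, map_one, map_mul, conj_conj]
  ring

lemma phi_phi_phi {c x y : ℂ} (hc : ‖c‖ < 1) (hx : ‖x‖ < 1) (hy : ‖y‖ ≤ 1) :
    phi (phi c x) (phi c y) = -((1 - c * conj x) / (1 - conj c * x)) * phi x y := by
  have hcx := one_sub_conj_mul_ne_zero hc hx.le
  have hcy := one_sub_conj_mul_ne_zero hc hy
  have hxy := one_sub_conj_mul_ne_zero hx hy
  have hxc : 1 - c * conj x ≠ 0 := by simpa [mul_comm] using (map_ne_zero conj).2 hcx
  have hcc : 1 - c * conj c ≠ 0 := by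
    rw [mul_conj']; norm_cast
    nlinarith [norm_nonneg c]
  rw [phi, phi_sub_phi hcx hcy, one_sub_conj_phi_mul_phi hcx hcy, phi, div_div_div_eq, neg_mul,
    div_mul_div_comm, ← neg_div, div_eq_div_iff (by simp [*]) (by simp [*])]
  ring

lemma phi_mul_mul {u : ℂ} (hu : ‖u‖ = 1) (a z : ℂ) : phi (u * a) (u * z) = u * phi a z := by
  have hu' : conj u * u = 1 := by rw [conj_mul', hu]; norm_num
  rw [phi, phi, map_mul, mul_mul_mul_comm, hu', one_mul, ← mul_sub, mul_div_assoc]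

lemma eq_zero_of_phi_eq_neg_phi_neg {c X : ℂ} (hc : ‖c‖ < 1) (hX : ‖X‖ < 1)
    (h : phi c X = -phi c (-X)) : c = 0 := by
  have h₁ := one_sub_conj_mul_ne_zero hc hX.le
  have h₂ := one_sub_conj_mul_ne_zero hc (norm_neg X ▸ hX.le)
  rw [phi, phi, ← neg_div, div_eq_div_iff h₁ h₂] at h
  have hcX : c = conj c * X ^ 2 := by linear_combination h / 2
  have hnorm : ‖c‖ * (1 - ‖X‖ ^ 2) = 0 := by
    have := congrArg norm hcX
    rw [norm_mul, norm_conj, norm_pow] at this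
    linear_combination this
  have hX2 : 0 < 1 - ‖X‖ ^ 2 := by nlinarith [norm_nonneg X]
  simpa [hX2.ne'] using hnorm

/-- After moving `m` to `0` by `φ_m`, the point `φ_m m'` is a midpoint of `X` and `-X`
(`X = φ_m x`), which forces it to be `0`. -/
lemma eq_of_phi_eq_neg_phi {m m' x y : ℂ} (hm : ‖m‖ < 1) (hm' : ‖m'‖ < 1) (hx : ‖x‖ < 1)
    (hy : ‖y‖ < 1) (h : phi m x = -phi m y) (h' : phi m' x = -phi m' y) : m' = m := by
  have hsymm : phi (phi m m') (phi m x) = -phi (phi m m') (-phi m x) := by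
    rw [show -phi m x = phi m y by rw [h, neg_neg], phi_phi_phi hm hm' hx.le,
      phi_phi_phi hm hm' hy.le, h']
    ring
  have h0 := eq_zero_of_phi_eq_neg_phi_neg (norm_phi_lt_one hm hm') (norm_phi_lt_one hm hx) hsymm
  rw [phi, div_eq_zero_iff, sub_eq_zero] at h0
  exact h0.resolve_right (one_sub_conj_mul_ne_zero hm hm'.le) |>.symm

noncomputable def discAut (α : ℝ) (w x : ℂ) : ℂ := exp (I * α) * phi w x

lemma norm_exp_I_mul (α : ℝ) : ‖exp (I * α)‖ = 1 := by
  rw [mul_comm]; exact norm_exp_ofReal_mul_I α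

lemma norm_discAut_lt_one (α : ℝ) {w x : ℂ} (hw : ‖w‖ < 1) (hx : ‖x‖ < 1) :
    ‖discAut α w x‖ < 1 := by
  rw [discAut, norm_mul, norm_exp_I_mul, one_mul]
  exact norm_phi_lt_one hw hx

lemma phi_discAut_discAut (α : ℝ) {w m x : ℂ} (hw : ‖w‖ < 1) (hm : ‖m‖ < 1) (hx : ‖x‖ ≤ 1) :
    phi (discAut α w m) (discAut α w x)
      = exp (I * α) * -((1 - w * conj m) / (1 - conj w * m)) * phi m x := by
  rw [discAut, discAut, phi_mul_mul (norm_exp_I_mul α), phi_phi_phi hw hm hx, mul_assoc]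

lemma midpoint_discAut {M : ℂ → ℂ → ℂ}
    (hM : ∀ x ∈ Disc, ∀ y ∈ Disc, M x y ∈ Disc ∧ phi (M x y) x = -(phi (M x y) y))
    (α : ℝ) {w x y : ℂ} (hw : w ∈ Disc) (hx : x ∈ Disc) (hy : y ∈ Disc) :
    M (discAut α w x) (discAut α w y) = discAut α w (M x y) := by
  have hgx : discAut α w x ∈ Disc := norm_discAut_lt_one α hw hx
  have hgy : discAut α w y ∈ Disc := norm_discAut_lt_one α hw hy
  obtain ⟨hm, hmid⟩ := hM x hx y hy
  obtain ⟨hm', hmid'⟩ := hM _ hgx _ hgy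
  refine eq_of_phi_eq_neg_phi (norm_discAut_lt_one α hw hm) hm' hgx hgy ?_ hmid'
  rw [phi_discAut_discAut α hw hm hx.le, phi_discAut_discAut α hw hm hy.le, hmid]
  ring

lemma HasDerivAt.carg_real {f : ℝ → ℂ} {f' : ℂ} {x : ℝ} (hf : HasDerivAt f f' x)
    (hx : f x ∈ slitPlane) : HasDerivAt (fun t => arg (f t)) (f' / f x).im x := by
  simpa [Function.comp_def, log_im] using imCLM.hasFDerivAt.comp_hasDerivAt x (hf.clog_real hx)

lemma conj_div_self_eq_exp {v : ℂ} (hv : v ≠ 0) : conj v / v = exp (I * ↑(-2 * arg v)) := by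
  have h := norm_mul_exp_arg_mul_I v
  set t := arg v
  rw [div_eq_iff hv, ← h, map_mul, conj_ofReal, ← exp_conj, mul_left_comm, ← exp_add]
  congr 2
  simp only [map_mul, conj_ofReal, conj_I]
  push_cast
  ring

/-- A continuous lift of the boundary map `θ ↦ g(e^{iθ})` to angles: `1 - w̄ e^{iθ}` has positive
real part, so its `arg` is smooth in `θ`. -/
noncomputable def boundaryAngle (α : ℝ) (w : ℂ) (θ : ℝ) : ℝ :=
  α + Real.pi + θ - 2 * arg (1 - conj w * exp (I * θ))

lemma exp_boundaryAngle (α : ℝ) {w : ℂ} (hw : ‖w‖ < 1) (θ : ℝ) :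
    exp (I * boundaryAngle α w θ) = discAut α w (exp (I * θ)) := by
  set e := exp (I * θ)
  set v := 1 - conj w * e
  have he : conj e * e = 1 := by rw [conj_mul', norm_exp_I_mul]; norm_num
  have hv : v ≠ 0 := one_sub_conj_mul_ne_zero hw (norm_exp_I_mul θ).le
  have hphi : phi w e = -e * (conj v / v) := by
    rw [phi, ← mul_div_assoc, div_left_inj' hv]
    simp only [v, map_sub, map_one, map_mul, conj_conj]
    linear_combination -w * he
  rw [boundaryAngle, discAut, hphi, conj_div_self_eq_exp hv,
    show I * ↑(α + Real.pi + θ - 2 * arg v) = I * α + Real.pi * I + I * θ + I * ↑(-2 * arg v) by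
      push_cast; ring,
    exp_add, exp_add, exp_add, exp_pi_mul_I]
  ring

lemma exp_I_mul_add_two_pi (θ : ℝ) : exp (I * ↑(θ + 2 * Real.pi)) = exp (I * θ) := by
  rw [show I * ↑(θ + 2 * Real.pi) = I * θ + 2 * Real.pi * I by push_cast; ring, exp_add,
    exp_two_pi_mul_I, mul_one]

lemma boundaryAngle_add_two_pi (α : ℝ) (w : ℂ) (θ : ℝ) :
    boundaryAngle α w (θ + 2 * Real.pi) = boundaryAngle α w θ + 2 * Real.pi := by
  rw [boundaryAngle, boundaryAngle, exp_I_mul_add_two_pi]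
  ring

lemma poissonKernel_zero_of_norm_eq_one {w b : ℂ} (hb : ‖b‖ = 1) :
    poissonKernel 0 w b = (1 - normSq w) / normSq (1 - conj w * b) := by
  have hbw : 1 - conj w * b = b * conj (b - w) := by
    rw [map_sub, mul_sub, mul_conj', hb]; push_cast; ring
  rw [poissonKernel, hbw, normSq_mul, normSq_conj]
  simp [normSq_eq_norm_sq, hb]

lemma poissonKernel_zero_pos {w b : ℂ} (hw : ‖w‖ < 1) (hb : ‖b‖ = 1) : 0 < poissonKernel 0 w b := by
  rw [poissonKernel_zero_of_norm_eq_one hb]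
  exact div_pos (sub_pos.2 (normSq_lt_one_iff.2 hw))
    (normSq_pos.2 (one_sub_conj_mul_ne_zero hw hb.le))

lemma one_add_two_mul_re_div_one_sub {q : ℂ} (hq : q ≠ 1) :
    1 + 2 * (q / (1 - q)).re = (1 - normSq q) / normSq (1 - q) := by
  have h : normSq (1 - q) ≠ 0 := normSq_pos.2 (sub_ne_zero.2 hq.symm) |>.ne'
  rw [div_re, eq_div_iff h]
  field_simp
  simp only [normSq_apply, sub_re, sub_im, one_re, one_im]
  ring

lemma hasDerivAt_boundaryAngle (α : ℝ) {w : ℂ} (hw : ‖w‖ < 1) (θ : ℝ) :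
    HasDerivAt (boundaryAngle α w) (poissonKernel 0 w (exp (I * θ))) θ := by
  set e := exp (I * θ)
  have hexp : HasDerivAt (fun t : ℝ => exp (I * t)) (I * e) θ := by
    simpa [mul_comm] using ((hasDerivAt_id θ).ofReal_comp.const_mul I).cexp
  have hq : ‖conj w * e‖ < 1 := by rwa [norm_mul, norm_conj, norm_exp_I_mul, mul_one]
  have hslit : 1 - conj w * e ∈ slitPlane := by
    simpa [sub_eq_add_neg] using
      mem_slitPlane_of_norm_lt_one (z := -(conj w * e)) (by rwa [norm_neg])
  have harg := ((hexp.const_mul (conj w)).const_sub 1).carg_real hslit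
  refine (((hasDerivAt_id θ).const_add (α + Real.pi)).sub (harg.const_mul 2)).congr_deriv ?_
  have hq1 : conj w * e ≠ 1 := fun h => by simp [h] at hq
  have him : (-(conj w * (I * e)) / (1 - conj w * e)).im = -(conj w * e / (1 - conj w * e)).re := by
    rw [show -(conj w * (I * e)) = -I * (conj w * e) by ring, mul_div_assoc]
    simp
  have he : normSq e = 1 := by rw [normSq_eq_norm_sq, norm_exp_I_mul]; norm_num
  rw [poissonKernel_zero_of_norm_eq_one (norm_exp_I_mul θ), him]
  rw [show 1 - normSq w = 1 - normSq (conj w * e) by rw [normSq_mul, normSq_conj, he, mul_one],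
    ← one_add_two_mul_re_div_one_sub hq1]
  ring

lemma planeWaveBase_discAut (α : ℝ) {w x b : ℂ} (hw : ‖w‖ < 1) (hx : ‖x‖ < 1) (hb : ‖b‖ = 1) :
    (1 - ‖discAut α w x‖ ^ 2) / ‖discAut α w x - discAut α w b‖ ^ 2
      = (1 - ‖x‖ ^ 2) / ‖x - b‖ ^ 2 * (poissonKernel 0 w b)⁻¹ := by
  have hwx := one_sub_conj_mul_ne_zero hw hx.le
  have hwb := one_sub_conj_mul_ne_zero hw hb.le
  have hxb : x - b ≠ 0 := sub_ne_zero.2 fun h => by simp [h, hb] at hx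
  simp only [discAut, ← mul_sub, norm_mul, norm_exp_I_mul, one_mul, Complex.sq_norm]
  rw [one_sub_normSq_phi hwx, normSq_phi_sub_phi hwx hwb, poissonKernel_zero_of_norm_eq_one hb]
  field_simp [normSq_pos.2 hwx |>.ne', normSq_pos.2 hwb |>.ne', normSq_pos.2 hxb |>.ne']

lemma pw_discAut (lam α : ℝ) {w x b : ℂ} (hw : ‖w‖ < 1) (hx : ‖x‖ < 1) (hb : ‖b‖ = 1) :
    pw lam (discAut α w b) (discAut α w x)
      = pw lam b x * (((poissonKernel 0 w b)⁻¹ : ℝ) : ℂ) ^ ((1 + I * lam) / 2) := by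
  rw [pw, pw, planeWaveBase_discAut α hw hx hb, ofReal_mul]
  have hx2 : 0 ≤ 1 - ‖x‖ ^ 2 := by nlinarith [norm_nonneg x]
  exact mul_cpow_ofReal_nonneg (div_nonneg hx2 (sq_nonneg _))
    (inv_nonneg.2 (poissonKernel_zero_pos hw hb).le) _

lemma pw_mul_pw_neg_discAut (lam α : ℝ) {w y z b : ℂ} (hw : ‖w‖ < 1) (hy : ‖y‖ < 1)
    (hz : ‖z‖ < 1) (hb : ‖b‖ = 1) :
    pw lam (discAut α w b) (discAut α w y) * pw (-lam) (discAut α w b) (discAut α w z)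
      = pw lam b y * pw (-lam) b z * ((poissonKernel 0 w b)⁻¹ : ℝ) := by
  have hK : (((poissonKernel 0 w b)⁻¹ : ℝ) : ℂ) ≠ 0 := by
    exact_mod_cast (inv_pos.2 (poissonKernel_zero_pos hw hb)).ne'
  rw [pw_discAut lam α hw hy hb, pw_discAut (-lam) α hw hz hb, mul_mul_mul_comm,
    ← cpow_add _ _ hK, show (1 + I * lam) / 2 + (1 + I * ↑(-lam)) / 2 = 1 by push_cast; ring,
    cpow_one]

lemma integral_deriv_smul_comp_of_periodic {E : Type*} [NormedAddCommGroup E] [NormedSpace ℝ E]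
    {f f' : ℝ → ℝ} {F : ℝ → E} {T : ℝ} (hF : Function.Periodic F T)
    (hfT : ∀ x, f (x + T) = f x + T) (hf : ∀ x, HasDerivAt f (f' x) x) (hf' : ∀ x, 0 ≤ f' x) :
    ∫ x in 0..T, f' x • F (f x) = ∫ x in 0..T, F x := by
  have hcont : ContinuousOn f (Set.uIcc 0 T) := fun x _ => (hf x).continuousAt.continuousWithinAt
  calc ∫ x in 0..T, f' x • F (f x) = ∫ x in f 0..f 0 + T, F x := by
        rw [← hfT, zero_add]
        exact intervalIntegral.integral_deriv_smul_comp_of_deriv_nonneg hcont (fun x _ => hf x)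
          fun x _ => hf' x
    _ = ∫ x in 0..T, F x := by simpa using hF.intervalIntegral_add_eq (f 0) 0

theorem stmt3_general (M : ℂ → ℂ → ℂ)
    (hM : ∀ x ∈ Disc, ∀ y ∈ Disc, M x y ∈ Disc ∧ phi (M x y) x = -(phi (M x y) y))
    (a : ℂ → ℝ → ℂ → ℂ)
    (α : ℝ) (w : ℂ) (hw : w ∈ Disc) (y : ℂ) (hy : y ∈ Disc) (z : ℂ) (hz : z ∈ Disc) :
    weylKernel M a (Complex.exp (Complex.I * α) * phi w y)
        (Complex.exp (Complex.I * α) * phi w z)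
      = weylKernel M
          (fun x lam b =>
            a (Complex.exp (Complex.I * α) * phi w x) lam
              (Complex.exp (Complex.I * α) * phi w b)) y z := by
  change weylKernel M a (discAut α w y) (discAut α w z)
    = weylKernel M (fun x lam b => a (discAut α w x) lam (discAut α w b)) y z
  simp only [weylKernel, midpoint_discAut hM α hw hz hy]
  congr 1 with lam
  congr 1
  have hP (θ : ℝ) : 0 < poissonKernel 0 w (exp (I * θ)) :=
    poissonKernel_zero_pos hw (norm_exp_I_mul θ)
  refine (integral_deriv_smul_comp_of_periodic (fun s => ?_) (boundaryAngle_add_two_pi α w)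
    (hasDerivAt_boundaryAngle α hw) fun θ => (hP θ).le).symm.trans
    (intervalIntegral.integral_congr fun θ _ => ?_)
  · simp only [exp_I_mul_add_two_pi]
  · have hK : (poissonKernel 0 w (exp (I * θ)) : ℂ) ≠ 0 := by exact_mod_cast (hP θ).ne'
    simp only [exp_boundaryAngle α hw, real_smul, mul_assoc,
      pw_mul_pw_neg_discAut lam α hw hy hz (norm_exp_I_mul θ), ofReal_inv]
    field_simp

/-- Equivariance of the Weyl integral kernel:
`ã(g(y), g(z)) = (a^g)~(y,z)` for every holomorphic automorphism `g = e^{iα}·φ_w` of the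
disc, where `a^g(x;λ,b) = a(g(x);λ,g(b))`. -/
theorem stmt3 (M : ℂ → ℂ → ℂ)
    (hM : ∀ x ∈ Disc, ∀ y ∈ Disc, M x y ∈ Disc ∧ phi (M x y) x = -(phi (M x y) y))
    (a : ℂ → ℝ → ℂ → ℂ)
    (hac : Continuous fun p : ℂ × ℝ × ℂ => a p.1 p.2.1 p.2.2)
    (hacs : HasCompactSupport fun p : ℂ × ℝ × ℂ => a p.1 p.2.1 p.2.2)
    (hasupp : tsupport (fun p : ℂ × ℝ × ℂ => a p.1 p.2.1 p.2.2) ⊆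
      Disc ×ˢ (Set.univ : Set ℝ) ×ˢ Metric.sphere (0 : ℂ) 1)
    (α : ℝ) (w : ℂ) (hw : w ∈ Disc) (y : ℂ) (hy : y ∈ Disc) (z : ℂ) (hz : z ∈ Disc) :
    weylKernel M a (Complex.exp (Complex.I * α) * phi w y)
        (Complex.exp (Complex.I * α) * phi w z)
      = weylKernel M
          (fun x lam b =>
            a (Complex.exp (Complex.I * α) * phi w x) lam
              (Complex.exp (Complex.I * α) * phi w b)) y z :=
  stmt3_general M hM a α w hw y hy z hz
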